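/- The syzygy module of the six vectors L₁,…,L₆ ∈ S⁸ (the rows given in the paper) is generated by the single vector J′ = (x₁₂² − x₁₁x₂₂, −x₀₂x₁₂ + x₀₁x₂₂, x₁₁x₀₂ − x₀₁x₁₂, x₀₂² − x₀₀x₂₂, −x₀₁x₀₂ + x₀₀x₁₂, x₀₁² − x₀₀x₁₁): if Σᵢ AᵢLᵢ = 0 with Aᵢ ∈ S, then (A₁,…,A₆) is an S-multiple of J′. -/
import Mathlib

open MvPolynomial

set_option maxHeartbeats 1000000
set_option synthInstance.maxHeartbeats 400000

-- `X 0,…,X 5` stand for `x₀₀, x₀₁, x₀₂, x₁₁, x₁₂, x₂₂`.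

/-- The six vectors `L₁,…,L₆ ∈ S⁸`. -/
noncomputable def Lvec (k : Type*) [CommRing k] : Fin 6 → (Fin 8 → MvPolynomial (Fin 6) k) :=
  ![![X 2, 0, -X 1, 0, 0, X 0, 0, 0],
    ![X 4, X 2, -X 3, -X 1, 0, X 1, X 0, 0],
    ![X 5, 0, -X 4, X 2, -X 1, 0, 0, X 0],
    ![0, X 4, 0, -X 3, 0, 0, X 1, 0],
    ![0, X 5, 0, 0, -X 3, -X 4, X 2, X 1],
    ![0, 0, 0, X 5, -X 4, -X 5, 0, X 2]]

/-- The vector `J′ ∈ S⁶`. -/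
noncomputable def Jvec (k : Type*) [CommRing k] : Fin 6 → MvPolynomial (Fin 6) k :=
  ![X 4 * X 4 - X 3 * X 5,
    -(X 2 * X 4) + X 1 * X 5,
    X 3 * X 2 - X 1 * X 4,
    X 2 * X 2 - X 0 * X 5,
    -(X 1 * X 2) + X 0 * X 4,
    X 1 * X 1 - X 0 * X 3]

lemma not_sq_aux (k : Type*) [Field k] (r : MvPolynomial (Fin 5) k) :
    r * r ≠ X 2 * X 4 := by
  intro h
  have h2 : (aeval (fun i : Fin 5 => if i = 2 then Polynomial.X else (1 : Polynomial k))) r *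
      (aeval (fun i : Fin 5 => if i = 2 then Polynomial.X else (1 : Polynomial k))) r
      = Polynomial.X := by
    rw [← map_mul, h]
    simp
  set s := (aeval (fun i : Fin 5 => if i = 2 then Polynomial.X else (1 : Polynomial k))) r with hs
  have hsne : s ≠ 0 := by
    intro h0
    rw [h0, mul_zero] at h2
    exact Polynomial.X_ne_zero h2.symm
  have := congrArg Polynomial.natDegree h2
  rw [Polynomial.natDegree_mul hsne hsne, Polynomial.natDegree_X] at this
  omega

lemma prime_p6 (k : Type*) [Field k] :
    Prime (X 4 * X 4 - X 3 * X 5 : MvPolynomial (Fin 6) k) := by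
  let e : MvPolynomial (Fin 6) k ≃ₐ[k] Polynomial (MvPolynomial (Fin 5) k) :=
    (renameEquiv k (Equiv.swap (0 : Fin 6) 4)).trans (finSuccEquiv k 5)
  have himg : e (X 4 * X 4 - X 3 * X 5) = Polynomial.X ^ 2 - Polynomial.C (X 2 * X 4) := by
    show (finSuccEquiv k 5) ((rename (Equiv.swap (0 : Fin 6) 4)) (X 4 * X 4 - X 3 * X 5))
        = Polynomial.X ^ 2 - Polynomial.C (X 2 * X 4)
    rw [map_sub, map_mul, map_mul, rename_X, rename_X, rename_X,
      show Equiv.swap (0 : Fin 6) 4 4 = 0 from by decide,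
      show Equiv.swap (0 : Fin 6) 4 3 = Fin.succ 2 from by decide,
      show Equiv.swap (0 : Fin 6) 4 5 = Fin.succ 4 from by decide,
      map_sub, map_mul, map_mul, finSuccEquiv_X_zero, finSuccEquiv_X_succ, finSuccEquiv_X_succ,
      ← map_mul, ← sq]
  have hK : ∀ b : FractionRing (MvPolynomial (Fin 5) k),
      b ^ 2 ≠ algebraMap (MvPolynomial (Fin 5) k) _ (X 2 * X 4) := by
    intro b hb
    have hint : IsIntegral (MvPolynomial (Fin 5) k) b := by
      apply IsIntegral.of_pow (n := 2) two_pos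
      rw [hb]
      exact isIntegral_algebraMap
    obtain ⟨r, hr⟩ := IsIntegrallyClosed.isIntegral_iff.mp hint
    apply not_sq_aux k r
    apply IsFractionRing.injective (MvPolynomial (Fin 5) k) (FractionRing (MvPolynomial (Fin 5) k))
    rw [map_mul, hr, ← sq, hb]
  have hirr : Irreducible (Polynomial.X ^ 2 - Polynomial.C (X 2 * X 4)
      : Polynomial (MvPolynomial (Fin 5) k)) := by
    rw [(Polynomial.monic_X_pow_sub_C (X 2 * X 4 : MvPolynomial (Fin 5) k)
      two_ne_zero).irreducible_iff_irreducible_map_fraction_map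
      (K := FractionRing (MvPolynomial (Fin 5) k)),
      Polynomial.map_sub, Polynomial.map_pow, Polynomial.map_X, Polynomial.map_C]
    exact X_pow_sub_C_irreducible_of_prime Nat.prime_two hK
  have : Irreducible (X 4 * X 4 - X 3 * X 5 : MvPolynomial (Fin 6) k) := by
    rw [← MulEquiv.irreducible_iff
      (e : MvPolynomial (Fin 6) k ≃* Polynomial (MvPolynomial (Fin 5) k))]
    show Irreducible (e (X 4 * X 4 - X 3 * X 5))
    rw [himg]
    exact hirr
  exact (UniqueFactorizationMonoid.irreducible_iff_prime).mp this

lemma not_dvd_aux (k : Type*) [Field k] :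
    ¬ (X 4 * X 4 - X 3 * X 5 : MvPolynomial (Fin 6) k) ∣ (X 1 * X 1 - X 0 * X 3) := by
  intro hd
  have h2 := map_dvd (aeval (fun i : Fin 6 => if i = 1 then (1 : k) else 0)) hd
  simp only [map_sub, map_mul, aeval_X] at h2
  rw [if_neg (by decide), if_neg (by decide), if_neg (by decide), if_pos (by decide)] at h2
  simp at h2

theorem syzygy_of_L_is_multiple_of_J (k : Type*) [Field k]
    (A : Fin 6 → MvPolynomial (Fin 6) k)
    (hA : ∑ i : Fin 6, A i • Lvec k i = 0) :
    ∃ c : MvPolynomial (Fin 6) k, A = c • Jvec k := by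
  have hj : ∀ j : Fin 8, A 0 * Lvec k 0 j + A 1 * Lvec k 1 j + A 2 * Lvec k 2 j
      + A 3 * Lvec k 3 j + A 4 * Lvec k 4 j + A 5 * Lvec k 5 j = 0 := by
    intro j
    have := congrFun hA j
    simpa [Fin.sum_univ_six, add_assoc] using this
  have h0 : A 0 * X 2 + A 1 * X 4 + A 2 * X 5 + A 3 * 0 + A 4 * 0 + A 5 * 0 = 0 := hj 0
  have h1 : A 0 * 0 + A 1 * X 2 + A 2 * 0 + A 3 * X 4 + A 4 * X 5 + A 5 * 0 = 0 := hj 1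
  have h2 : A 0 * (-X 1) + A 1 * (-X 3) + A 2 * (-X 4) + A 3 * 0 + A 4 * 0 + A 5 * 0 = 0 := hj 2
  have h3 : A 0 * 0 + A 1 * (-X 1) + A 2 * (X 2) + A 3 * (-X 3) + A 4 * 0 + A 5 * (X 5) = 0 := hj 3
  have h4 : A 0 * 0 + A 1 * 0 + A 2 * (-X 1) + A 3 * 0 + A 4 * (-X 3) + A 5 * (-X 4) = 0 := hj 4
  have h5 : A 0 * (X 0) + A 1 * (X 1) + A 2 * 0 + A 3 * 0 + A 4 * (-X 4) + A 5 * (-X 5) = 0 := hj 5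
  have e1 : (X 4 * X 4 - X 3 * X 5) * A 1 = (-(X 2 * X 4) + X 1 * X 5) * A 0 := by
    linear_combination (X 4 : MvPolynomial (Fin 6) k) * h0 + (X 5 : MvPolynomial (Fin 6) k) * h2
  have e2 : (X 4 * X 4 - X 3 * X 5) * A 2 = (X 3 * X 2 - X 1 * X 4) * A 0 := by
    linear_combination (-X 3 : MvPolynomial (Fin 6) k) * h0 + (-X 4 : MvPolynomial (Fin 6) k) * h2
  have e3 : (X 4 * X 4 - X 3 * X 5) * A 3 = (X 2 * X 2 - X 0 * X 5) * A 0 := by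
    linear_combination (-X 2 : MvPolynomial (Fin 6) k) * h0 + (X 4 : MvPolynomial (Fin 6) k) * h1
      + (X 5 : MvPolynomial (Fin 6) k) * h3 + (X 5 : MvPolynomial (Fin 6) k) * h5
  have e4 : (X 4 * X 4 - X 3 * X 5) * A 4 = (-(X 1 * X 2) + X 0 * X 4) * A 0 := by
    linear_combination (-X 3 : MvPolynomial (Fin 6) k) * h1 + (-X 2 : MvPolynomial (Fin 6) k) * h2
      + (-X 4 : MvPolynomial (Fin 6) k) * h3 + (-X 4 : MvPolynomial (Fin 6) k) * h5
  have e5 : (X 4 * X 4 - X 3 * X 5) * A 5 = (X 1 * X 1 - X 0 * X 3) * A 0 := by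
    linear_combination (X 1 : MvPolynomial (Fin 6) k) * h2 + (-X 4 : MvPolynomial (Fin 6) k) * h4
      + (X 3 : MvPolynomial (Fin 6) k) * h5
  have hp := prime_p6 k
  have hdvd : (X 4 * X 4 - X 3 * X 5 : MvPolynomial (Fin 6) k) ∣ (X 1 * X 1 - X 0 * X 3) * A 0 :=
    ⟨A 5, e5.symm⟩
  have hA0 : (X 4 * X 4 - X 3 * X 5 : MvPolynomial (Fin 6) k) ∣ A 0 :=
    (hp.2.2 _ _ hdvd).resolve_left (not_dvd_aux k)
  obtain ⟨c, hc⟩ := hA0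
  refine ⟨c, ?_⟩
  have hne : (X 4 * X 4 - X 3 * X 5 : MvPolynomial (Fin 6) k) ≠ 0 := hp.ne_zero
  funext i
  rw [Pi.smul_apply, smul_eq_mul]
  fin_cases i
  · show A 0 = c * (X 4 * X 4 - X 3 * X 5)
    rw [hc]; ring
  · show A 1 = c * (-(X 2 * X 4) + X 1 * X 5)
    apply mul_left_cancel₀ hne
    linear_combination e1 + (-(X 2 * X 4) + X 1 * X 5 : MvPolynomial (Fin 6) k) * hc
  · show A 2 = c * (X 3 * X 2 - X 1 * X 4)
    apply mul_left_cancel₀ hne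
    linear_combination e2 + (X 3 * X 2 - X 1 * X 4 : MvPolynomial (Fin 6) k) * hc
  · show A 3 = c * (X 2 * X 2 - X 0 * X 5)
    apply mul_left_cancel₀ hne
    linear_combination e3 + (X 2 * X 2 - X 0 * X 5 : MvPolynomial (Fin 6) k) * hc
  · show A 4 = c * (-(X 1 * X 2) + X 0 * X 4)
    apply mul_left_cancel₀ hne
    linear_combination e4 + (-(X 1 * X 2) + X 0 * X 4 : MvPolynomial (Fin 6) k) * hc
  · show A 5 = c * (X 1 * X 1 - X 0 * X 3)
    apply mul_left_cancel₀ hne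
    linear_combination e5 + (X 1 * X 1 - X 0 * X 3 : MvPolynomial (Fin 6) k) * hc
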